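/- arXiv:2111.14674 — 3 statements merged into one kernel-verified Lean document; each statement's English description precedes it below -/
import Mathlib

section
/- If L = VᵀV + BᵀCB with V, B ∈ ℝ^{d×n} and C ∈ ℝ^{d×d} skew-symmetric, then every principal minor of L is nonnegative: det(L_S) ≥ 0 for all S ⊆ [n]. -/
open Matrix

lemma det_nonneg_of_quadform {ι : Type*} [Fintype ι] [DecidableEq ι]
    (M : Matrix ι ι ℝ) (h : ∀ x, 0 ≤ x ⬝ᵥ (M *ᵥ x)) : 0 ≤ M.det := by
  set g : ℝ → ℝ := fun s => (s • M + (1 - s) • (1 : Matrix ι ι ℝ)).det with hg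
  have hcont : Continuous g := by
    apply Continuous.matrix_det
    fun_prop
  have hne : ∀ s ∈ Set.Ico (0:ℝ) 1, g s ≠ 0 := by
    intro s hs hdet
    obtain ⟨x, hx, hx0⟩ := (Matrix.exists_mulVec_eq_zero_iff).mpr hdet
    have h1 : x ⬝ᵥ ((s • M + (1 - s) • (1 : Matrix ι ι ℝ)) *ᵥ x) = 0 := by
      rw [hx0]; simp
    rw [add_mulVec, dotProduct_add, smul_mulVec, dotProduct_smul,
      smul_mulVec, dotProduct_smul, one_mulVec, smul_eq_mul, smul_eq_mul] at h1
    have hxx : 0 < x ⬝ᵥ x := by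
      rcases lt_or_eq_of_le (Finset.sum_nonneg fun i _ => mul_self_nonneg (x i)) with h' | h'
      · exact h'
      · exact absurd (dotProduct_self_eq_zero.mp h'.symm) hx
    nlinarith [h x, hs.1, hs.2]
  have hpos : ∀ s ∈ Set.Ico (0:ℝ) 1, 0 < g s := by
    intro s hs
    have h0 : g 0 = 1 := by simp [hg]
    rcases lt_trichotomy (g s) 0 with hlt | heq | hgt
    · exfalso
      have hsub : Set.Icc (g s) (g 0) ⊆ g '' Set.Icc 0 s :=
        intermediate_value_Icc' hs.1 hcont.continuousOn
      have : (0:ℝ) ∈ Set.Icc (g s) (g 0) := by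
        refine ⟨le_of_lt hlt, ?_⟩
        rw [h0]; norm_num
      obtain ⟨c, hc, hc0⟩ := hsub this
      exact hne c ⟨hc.1, lt_of_le_of_lt hc.2 hs.2⟩ hc0
    · exact absurd heq (hne s hs)
    · exact hgt
  have h1M : g 1 = M.det := by simp [hg]
  have hnb : (nhdsWithin (1:ℝ) (Set.Ico 0 1)).NeBot := by
    apply mem_closure_iff_nhdsWithin_neBot.mp
    rw [closure_Ico (by norm_num : (0:ℝ) ≠ 1)]
    exact ⟨by norm_num, le_refl 1⟩
  have htend : Filter.Tendsto g (nhdsWithin (1:ℝ) (Set.Ico 0 1)) (nhds (g 1)) :=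
    (hcont.continuousAt).continuousWithinAt
  have : 0 ≤ g 1 :=
    ge_of_tendsto htend (Filter.eventually_inf_principal.mpr
      (Filter.Eventually.of_forall fun s hs => (hpos s hs).le))
  rwa [h1M] at this

/-- If `L = Vᵀ V + Bᵀ C B` with `C` skew-symmetric, then every principal minor
of `L` is nonnegative. -/
theorem ndpp_kernel_principal_minors_nonneg (d n : ℕ)
    (V B : Matrix (Fin d) (Fin n) ℝ) (C : Matrix (Fin d) (Fin d) ℝ)
    (hC : C = -Cᵀ) (S : Finset (Fin n)) :
    0 ≤ ((Vᵀ * V + Bᵀ * C * B).submatrix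
      (fun i : S => (i : Fin n)) (fun i : S => (i : Fin n))).det := by
  set f : S → Fin n := fun i => (i : Fin n) with hf
  set W : Matrix (Fin d) S ℝ := V.submatrix id f with hW
  set Wb : Matrix (Fin d) S ℝ := B.submatrix id f with hWb
  have hsub : (Vᵀ * V + Bᵀ * C * B).submatrix f f = Wᵀ * W + Wbᵀ * C * Wb := by
    ext i j
    simp [Matrix.mul_apply, Matrix.add_apply, hW, hWb, Finset.mul_sum, Finset.sum_mul]
  rw [hsub]
  apply det_nonneg_of_quadform
  intro x
  have hskew : ∀ y : Fin d → ℝ, y ⬝ᵥ (C *ᵥ y) = 0 := by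
    intro y
    have h1 : y ⬝ᵥ (C *ᵥ y) = (y ᵥ* C) ⬝ᵥ y := dotProduct_mulVec y C y
    have h2 : y ᵥ* C = -(C *ᵥ y) := by
      nth_rewrite 1 [hC]
      rw [vecMul_neg, vecMul_transpose]
    rw [h2, neg_dotProduct, dotProduct_comm] at h1
    have h3 : C *ᵥ y ⬝ᵥ y = 0 := by linarith
    rw [dotProduct_comm]
    exact h3
  rw [add_mulVec, dotProduct_add]
  have hq1 : x ⬝ᵥ ((Wᵀ * W) *ᵥ x) = (W *ᵥ x) ⬝ᵥ (W *ᵥ x) := by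
    rw [← mulVec_mulVec, dotProduct_mulVec, vecMul_transpose]
  have hq2 : x ⬝ᵥ ((Wbᵀ * C * Wb) *ᵥ x) = (Wb *ᵥ x) ⬝ᵥ (C *ᵥ (Wb *ᵥ x)) := by
    rw [Matrix.mul_assoc, ← mulVec_mulVec, dotProduct_mulVec, vecMul_transpose,
      ← mulVec_mulVec]
  rw [hq1, hq2, hskew, add_zero]
  exact Finset.sum_nonneg fun i _ => mul_self_nonneg _
end

section
/- Suppose a monotone nondecreasing set function f: 2^{[n]} → ℝ with f(∅) = 0 has submodularity ratio at least γ ∈ (0,1] with respect to an optimal set S* of size k, meaning for every S ⊆ [n], the sum over ω ∈ S* \ S of (f(S ∪ {ω}) − f(S)) is at least γ·(f(S ∪ S*) − f(S)). If an algorithm builds S_0 = ∅ and at each step i picks s_i with E[f(S_{i−1} ∪ {s_i}) − f(S_{i−1}) | S_{i−1}] ≥ (1 − 1/e)·(1/k)·Σ_{ω ∈ S* \ S_{i−1}} (f(S_{i−1} ∪ {ω}) − f(S_{i−1})), then E[f(S_k)] ≥ (1 − e^{−γ(1−1/e)})·f(S*). -/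
open MeasureTheory BigOperators

/-- Guarantee for a (randomized) greedy-type procedure on a monotone set function
with submodularity ratio `γ` with respect to an optimal size-`k` set `S*`:
if at every step the expected marginal gain is at least
`(1 − 1/e)·(1/k)` times the total marginal gain of the remaining optimal
elements, then `E[f(S_k)] ≥ (1 − e^{−γ(1−1/e)})·f(S*)`. -/
theorem randomized_greedy_submodularity_ratio
    {Ω : Type*} [MeasureSpace Ω] [IsProbabilityMeasure (volume : Measure Ω)]
    (n k : ℕ) (hk : 1 ≤ k)
    (f : Finset (Fin n) → ℝ) (γ : ℝ) (hγ0 : 0 < γ) (hγ1 : γ ≤ 1)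
    (Sstar : Finset (Fin n)) (hcard : Sstar.card = k)
    (hmono : ∀ A B : Finset (Fin n), A ⊆ B → f A ≤ f B)
    (hempty : f ∅ = 0)
    (hopt : ∀ R : Finset (Fin n), R.card = k → f R ≤ f Sstar)
    (hratio : ∀ A : Finset (Fin n),
      γ * (f (A ∪ Sstar) - f A) ≤ ∑ a ∈ Sstar \ A, (f (insert a A) - f A))
    (S : ℕ → Ω → Finset (Fin n))
    (hS0 : ∀ ω, S 0 ω = ∅)
    (hint : ∀ i, Integrable (fun ω => f (S i ω)))
    (hint' : ∀ i, Integrable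
      (fun ω => ∑ a ∈ Sstar \ S i ω, (f (insert a (S i ω)) - f (S i ω))))
    (hstep : ∀ i < k,
      ∫ ω, ((1 - 1 / Real.exp 1) * (1 / (k : ℝ)) *
        ∑ a ∈ Sstar \ S i ω, (f (insert a (S i ω)) - f (S i ω)))
      ≤ ∫ ω, (f (S (i + 1) ω) - f (S i ω))) :
    (1 - Real.exp (-(γ * (1 - 1 / Real.exp 1)))) * f Sstar
      ≤ ∫ ω, f (S k ω) := by
  have hk0 : (0:ℝ) < k := by exact_mod_cast hk
  have he1 : (1:ℝ) < Real.exp 1 := by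
    have := Real.exp_one_gt_d9; linarith
  have hinv : 0 < 1 / Real.exp 1 := by positivity
  have hinv1 : 1 / Real.exp 1 < 1 := by
    rw [div_lt_one (by positivity)]; exact he1
  set β : ℝ := 1 - 1 / Real.exp 1 with hβ
  have hβ0 : 0 < β := by rw [hβ]; linarith
  have hβ1 : β < 1 := by rw [hβ]; linarith
  set c : ℝ := β * (1 / (k:ℝ)) * γ with hc
  have hc0 : 0 < c := by positivity
  have hc1 : c ≤ 1 := by
    have h1k : 1 / (k:ℝ) ≤ 1 := by
      rw [div_le_one hk0]; exact_mod_cast hk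
    have := mul_le_one₀ (a := β) (b := 1/(k:ℝ)) (le_of_lt hβ1) (by positivity) h1k
    nlinarith
  have hfs0 : 0 ≤ f Sstar := by
    have := hmono ∅ Sstar (Finset.empty_subset _); linarith [hempty]
  -- key step inequality
  have key : ∀ i < k, f Sstar - ∫ ω, f (S (i+1) ω) ≤
      (1 - c) * (f Sstar - ∫ ω, f (S i ω)) := by
    intro i hi
    have hlow : ∀ ω : Ω, c * (f Sstar - f (S i ω)) ≤
        β * (1 / (k:ℝ)) * ∑ a ∈ Sstar \ S i ω, (f (insert a (S i ω)) - f (S i ω)) := by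
      intro ω
      have h1 := hratio (S i ω)
      have h2 : f Sstar ≤ f (S i ω ∪ Sstar) :=
        hmono _ _ Finset.subset_union_right
      have h3 : γ * (f Sstar - f (S i ω)) ≤
          ∑ a ∈ Sstar \ S i ω, (f (insert a (S i ω)) - f (S i ω)) := by
        nlinarith
      have hβk : 0 ≤ β * (1/(k:ℝ)) := by positivity
      calc c * (f Sstar - f (S i ω)) = β * (1/(k:ℝ)) * (γ * (f Sstar - f (S i ω))) := by
            ring
        _ ≤ _ := by exact mul_le_mul_of_nonneg_left h3 hβk
    have hintL : Integrable (fun ω => c * (f Sstar - f (S i ω))) := by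
      exact (((integrable_const (f Sstar)).sub (hint i)).const_mul c)
    have hintR : Integrable (fun ω =>
        β * (1 / (k:ℝ)) * ∑ a ∈ Sstar \ S i ω, (f (insert a (S i ω)) - f (S i ω))) :=
      (hint' i).const_mul _
    have hI : ∫ ω, c * (f Sstar - f (S i ω)) ≤
        ∫ ω, β * (1 / (k:ℝ)) * ∑ a ∈ Sstar \ S i ω, (f (insert a (S i ω)) - f (S i ω)) :=
      integral_mono hintL hintR hlow
    have h4 := hstep i hi
    have hsub : ∫ ω, (f (S (i+1) ω) - f (S i ω)) =
        (∫ ω, f (S (i+1) ω)) - ∫ ω, f (S i ω) :=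
      integral_sub (hint (i+1)) (hint i)
    have hL : ∫ ω, c * (f Sstar - f (S i ω)) =
        c * (f Sstar - ∫ ω, f (S i ω)) := by
      rw [integral_const_mul, integral_sub (integrable_const _) (hint i),
        integral_const]
      simp
    have : c * (f Sstar - ∫ ω, f (S i ω)) ≤
        (∫ ω, f (S (i+1) ω)) - ∫ ω, f (S i ω) := by
      rw [← hL, ← hsub]; exact hI.trans h4
    linarith
  have hbase : ∫ ω, f (S 0 ω) = 0 := by
    have : (fun ω => f (S 0 ω)) = fun _ => (0:ℝ) := by
      funext ω; rw [hS0 ω, hempty]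
    rw [this]; simp
  have main : ∀ i ≤ k, f Sstar - ∫ ω, f (S i ω) ≤ (1 - c)^i * f Sstar := by
    intro i
    induction i with
    | zero => intro _; simp [hbase]
    | succ j ih =>
      intro hj
      have hj' : j < k := hj
      have h1 := key j hj'
      have h2 := ih (le_of_lt hj')
      have h1c : 0 ≤ 1 - c := by linarith
      calc f Sstar - ∫ ω, f (S (j+1) ω) ≤ (1-c) * (f Sstar - ∫ ω, f (S j ω)) := h1
        _ ≤ (1-c) * ((1-c)^j * f Sstar) := mul_le_mul_of_nonneg_left h2 h1c
        _ = (1-c)^(j+1) * f Sstar := by ring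
  have hfin := main k le_rfl
  have hexp : (1-c)^k ≤ Real.exp (-(γ * β)) := by
    have h1 : 1 - c ≤ Real.exp (-c) := by
      have := Real.add_one_le_exp (-c); linarith
    have h2 : (1-c)^k ≤ (Real.exp (-c))^k :=
      pow_le_pow_left₀ (by linarith) h1 k
    have h3 : (Real.exp (-c))^k = Real.exp (-c * k) := by
      rw [← Real.exp_nat_mul]; ring_nf
    have hkne : (k:ℝ) ≠ 0 := ne_of_gt hk0
    have h4 : -c * k = -(γ * β) := by
      have ht : (1/(k:ℝ)) * (k:ℝ) = 1 := one_div_mul_cancel hkne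
      rw [hc]; linear_combination (-(β*γ)) * ht
    rw [h3, h4] at h2; exact h2
  have : (1-c)^k * f Sstar ≤ Real.exp (-(γ * β)) * f Sstar :=
    mul_le_mul_of_nonneg_right hexp hfs0
  have hgoal : f Sstar - ∫ ω, f (S k ω) ≤ Real.exp (-(γ * β)) * f Sstar :=
    hfin.trans this
  linarith [hgoal]
end

section
/- If C is a d×d real skew-symmetric invertible matrix and M is a d×d real symmetric positive semi-definite matrix, then det(C^{−1} + M) > 0. -/
/-!
The quadratic form of `C⁻¹` vanishes because `C⁻¹` is skew-symmetric, so `A = C⁻¹ + M` has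
quadratic form `x ↦ xᵀMx ≥ 0`. A kernel vector `v` of `A` would satisfy `vᵀMv = 0`, hence
`Mv = 0` and `C⁻¹v = 0`; so `det A ≠ 0`. Along the segment `(1 - t) • 1 + t • A`, `t ∈ [0, 1]`,
the quadratic form is positive definite for `t < 1`, so the determinant never vanishes and keeps
the sign of `det 1 = 1`.
-/

open Matrix

namespace Matrix

variable {n : Type*} [Fintype n]

theorem dotProduct_mulVec_self_eq_zero_of_transpose_eq_neg {R : Type*} [CommRing R]
    [NoZeroDivisors R] [CharZero R] {A : Matrix n n R} (hA : Aᵀ = -A) (x : n → R) :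
    x ⬝ᵥ A *ᵥ x = 0 := by
  have h := dotProduct_transpose_mulVec A x x
  rw [hA, neg_mulVec, dotProduct_neg, neg_eq_iff_add_eq_zero, ← two_mul] at h
  exact (mul_eq_zero.mp h).resolve_left two_ne_zero

theorem dotProduct_inv_mulVec_self_eq_zero_of_transpose_eq_neg {R : Type*} [CommRing R]
    [NoZeroDivisors R] [CharZero R] [DecidableEq n] {A : Matrix n n R} (hA : Aᵀ = -A)
    (hdet : IsUnit A.det) (x : n → R) : x ⬝ᵥ A⁻¹ *ᵥ x = 0 :=
  calc x ⬝ᵥ A⁻¹ *ᵥ x = A *ᵥ (A⁻¹ *ᵥ x) ⬝ᵥ A⁻¹ *ᵥ x := by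
        rw [mulVec_mulVec, mul_nonsing_inv A hdet, one_mulVec]
    _ = 0 := by
        rw [dotProduct_comm]
        exact dotProduct_mulVec_self_eq_zero_of_transpose_eq_neg hA _

theorem det_ne_zero_of_dotProduct_mulVec_self_ne_zero {K : Type*} [Field K] [DecidableEq n]
    {A : Matrix n n K} (hA : ∀ x ≠ 0, x ⬝ᵥ A *ᵥ x ≠ 0) : A.det ≠ 0 := by
  intro hdet
  obtain ⟨v, hv, hAv⟩ := exists_mulVec_eq_zero_iff.mpr hdet
  exact hA v hv (by rw [hAv, dotProduct_zero])

theorem det_add_ne_zero_of_posSemidef [DecidableEq n] {S M : Matrix n n ℝ}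
    (hS : ∀ x, x ⬝ᵥ S *ᵥ x = 0) (hSdet : S.det ≠ 0) (hM : M.PosSemidef) :
    (S + M).det ≠ 0 := by
  intro hdet
  obtain ⟨v, hv, hv0⟩ := exists_mulVec_eq_zero_iff.mpr hdet
  have hvMv : v ⬝ᵥ M *ᵥ v = 0 := by
    have h := congrArg (v ⬝ᵥ ·) hv0
    simpa only [add_mulVec, dotProduct_add, hS, zero_add, dotProduct_zero] using h
  have hMv : M *ᵥ v = 0 := (hM.dotProduct_mulVec_zero_iff v).mp (by simpa using hvMv)
  rw [add_mulVec, hMv, add_zero] at hv0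
  exact hSdet (exists_mulVec_eq_zero_iff.mp ⟨v, hv, hv0⟩)

theorem det_pos_of_dotProduct_mulVec_self_nonneg [DecidableEq n] {A : Matrix n n ℝ}
    (hA : ∀ x, 0 ≤ x ⬝ᵥ A *ᵥ x) (hdet : A.det ≠ 0) : 0 < A.det := by
  set f : ℝ → ℝ := fun t => ((1 - t) • (1 : Matrix n n ℝ) + t • A).det
  have hf_cont : Continuous f := by fun_prop
  have hf_ne : ∀ t ∈ Set.Icc (0 : ℝ) 1, f t ≠ 0 := by
    rintro t ⟨ht0, ht1⟩
    rcases ht1.eq_or_lt with rfl | ht1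
    · simpa [f] using hdet
    refine det_ne_zero_of_dotProduct_mulVec_self_ne_zero fun x hx => ne_of_gt ?_
    have hxx : 0 < x ⬝ᵥ x := by simpa using dotProduct_self_star_pos_iff.mpr hx
    simp only [add_mulVec, smul_mulVec, one_mulVec, dotProduct_add, dotProduct_smul, smul_eq_mul]
    exact add_pos_of_pos_of_nonneg (mul_pos (sub_pos.mpr ht1) hxx) (mul_nonneg ht0 (hA x))
  by_contra hneg
  obtain ⟨c, hc, hfc⟩ := intermediate_value_Icc' zero_le_one hf_cont.continuousOn
    ⟨by simpa [f] using not_lt.mp hneg, by simp [f]⟩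
  exact hf_ne c hc hfc

end Matrix

/-- If `C` is skew-symmetric and invertible and `M` is symmetric PSD, then
`det(C⁻¹ + M) > 0`. -/
theorem det_skew_inv_add_psd_pos (d : ℕ)
    (C M : Matrix (Fin d) (Fin d) ℝ)
    (hC : Cᵀ = -C) (hCinv : IsUnit C.det) (hM : M.PosSemidef) :
    0 < (C⁻¹ + M).det := by
  have hskew := dotProduct_inv_mulVec_self_eq_zero_of_transpose_eq_neg hC hCinv
  refine det_pos_of_dotProduct_mulVec_self_nonneg (fun x => ?_)
    (det_add_ne_zero_of_posSemidef hskew (isUnit_nonsing_inv_det C hCinv).ne_zero hM)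
  simpa [add_mulVec, hskew] using hM.dotProduct_mulVec_nonneg x
end
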